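/- Lemma 3.2. Let (X,f) be an expansive homeomorphism of a compact metric space, let Φ = {log φ_n}_{n∈ℕ} be a subadditive potential on (X,f), and define Ψ = {log ψ_n}_{n∈ℕ} on (X×X, f×f) by ψ_n(x,y) = φ_n(x)·φ_n(y). Then Ψ is a subadditive potential, and P(Ψ) = 2P(Φ). -/

import Mathlib

/-!
Write `Z_n(ε)` for the largest weight `∑_{x ∈ E} φ_n(x)` of an `(n,ε)`-separated set `E`.
Products of separated sets are separated for `f × f`, so `Z_n(ε)² ≤ Z^{f×f}_n(ε)`. Conversely,
for an `(n,ε)`-separated `F ⊆ X × X` pick the heaviest first coordinate `x₁`: the pairs whose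
first coordinate stays `ε/2`-close to `x₁` along the orbit have `ε`-separated second coordinates,
so they weigh at most `φ_n(x₁) Z_n(ε)`; recursing on the other pairs gives
`Z^{f×f}_n(ε) ≤ Z_n(ε) Z_n(ε/2) ≤ Z_n(ε/2)²`. Taking `(1/n) log`, `limsup` and `sup_ε` yields
`P(Ψ) = 2 P(Φ)`. Because the limsups are taken in `ℝ`, one also needs both pressures to fall on
the junk value `0` together: `Z_n(ε/2) ≤ N^n Z_n(ε)` makes all the rates tend to `-∞`
simultaneously, and subadditivity bounds them above.
-/

open Filter MeasureTheory
open scoped ENNReal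

namespace SubEq

variable {X : Type*}

/-! ### Bowen balls, separated sets, topological pressure -/

/-- The Bowen ball `B_n(x,ε)` with respect to a distance function `ρ` and a map `f`. -/
def bowenBall (ρ : X → X → ℝ) (f : X → X) (n : ℕ) (ε : ℝ) (x : X) : Set X :=
  {y | ∀ k < n, ρ (f^[k] x) (f^[k] y) ≤ ε}

/-- `E` is `(n,ε)`-separated for `f` with respect to the distance `ρ`. -/
def IsSeparatedSet (ρ : X → X → ℝ) (f : X → X) (n : ℕ) (ε : ℝ) (E : Finset X) : Prop :=
  ∀ x ∈ E, ∀ y ∈ E, x ≠ y → ∃ k < n, ε ≤ ρ (f^[k] x) (f^[k] y)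

/-- The subadditive topological pressure
`P(Φ) = lim_{ε→0} limsup_n (1/n) log sup { Σ_{x∈E} φ_n x : E (n,ε)-separated }`;
since the inner quantity is monotone as `ε` decreases, the limit as `ε → 0` is the
supremum over `ε > 0`. -/
noncomputable def pressure (ρ : X → X → ℝ) (f : X → X) (φ : ℕ → X → ℝ) : ℝ :=
  sSup {p : ℝ | ∃ ε > (0:ℝ), p = atTop.limsup (fun n =>
    Real.log (sSup ((fun E : Finset X => ∑ x ∈ E, φ n x) ''
      {E : Finset X | IsSeparatedSet ρ f n ε E})) / n)}

/-- `Φ = {log φ_n}` is a subadditive potential on `(X,f)`: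
each `φ_n` is continuous and positive and
`log φ_{m+n} ≤ log φ_m + log φ_n ∘ f^m`. -/
def IsSubadditivePotential [TopologicalSpace X] (f : X → X) (φ : ℕ → X → ℝ) : Prop :=
  (∀ n, Continuous (φ n)) ∧ (∀ n x, 0 < φ n x) ∧
    ∀ m n, 1 ≤ m → 1 ≤ n → ∀ x : X,
      Real.log (φ (m + n) x) ≤ Real.log (φ m x) + Real.log (φ n (f^[m] x))

/-! ### Kolmogorov–Sinai entropy -/

/-- Static entropy `H_μ(ξ)` of the finite partition of `X` given by the fibers of
`p : X → ι`. -/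
noncomputable def partInfo [MeasurableSpace X] (μ : Measure X) {ι : Type} [Fintype ι]
    (p : X → ι) : ℝ :=
  ∑ i : ι, Real.negMulLog ((μ (p ⁻¹' {i})).toReal)

/-- The dynamical refinement `⋁_{k=0}^{n-1} f^{-k} ξ` of the partition given by `p`. -/
def refinePart (f : X → X) {ι : Type} (p : X → ι) (n : ℕ) : X → (Fin n → ι) :=
  fun x k => p (f^[(k : ℕ)] x)

/-- Entropy of `f` relative to the partition given by `p`; by subadditivity the limit
defining it equals the infimum. -/
noncomputable def entropyOfPart [MeasurableSpace X] (μ : Measure X) (f : X → X)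
    {ι : Type} [Fintype ι] (p : X → ι) : ℝ :=
  ⨅ n : ℕ, partInfo μ (refinePart f p (n + 1)) / (n + 1)

/-- The Kolmogorov–Sinai entropy `h_μ(f)`: the supremum over all finite measurable
partitions of the corresponding partition entropies. -/
noncomputable def entropyKS [MeasurableSpace X] (μ : Measure X) (f : X → X) : ℝ :=
  sSup {h : ℝ | ∃ (m : ℕ) (p : X → Fin m),
    (∀ i, MeasurableSet (p ⁻¹' {i})) ∧ h = entropyOfPart μ f p}

/-! ### Equilibrium states -/

/-- `μ` is an equilibrium state of the subadditive potential `Φ = {log φ_n}`: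
it is an `f`-invariant Borel probability measure with
`h_μ(f) + lim_n (1/n) ∫ log φ_n dμ = P(Φ)`. -/
def IsEqState [TopologicalSpace X] [MeasurableSpace X] (ρ : X → X → ℝ) (f : X → X)
    (φ : ℕ → X → ℝ) (μ : Measure X) : Prop :=
  IsProbabilityMeasure μ ∧ MeasurePreserving f μ μ ∧
    ∃ L : ℝ, Tendsto (fun n => (∫ x, Real.log (φ n x) ∂μ) / n) atTop (nhds L) ∧
      entropyKS μ f + L = pressure ρ f φ

/-- Bounded distortion: there is `C ≥ 1` such that for all sufficiently small `ε > 0`,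
all `x`, `n` and all `y,z ∈ B_n(x,ε)` one has `C⁻¹ ≤ φ_n(y)/φ_n(z) ≤ C`. -/
def HasBoundedDistortion (ρ : X → X → ℝ) (f : X → X) (φ : ℕ → X → ℝ) : Prop :=
  ∃ C : ℝ, 1 ≤ C ∧ ∃ ε₀ > (0:ℝ), ∀ ε, 0 < ε → ε ≤ ε₀ → ∀ (x : X) (n : ℕ),
    ∀ y ∈ bowenBall ρ f n ε x, ∀ z ∈ bowenBall ρ f n ε x,
      C⁻¹ ≤ φ n y / φ n z ∧ φ n y / φ n z ≤ C

/-- The lower subadditive Gibbs property: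
for every `ε > 0` there is `C ≥ 1` with `μ(B_n(x,ε)) ≥ C⁻¹ e^{-nP(Φ)} φ_n(x)`. -/
def HasLowerGibbs [TopologicalSpace X] [MeasurableSpace X] (ρ : X → X → ℝ) (f : X → X)
    (φ : ℕ → X → ℝ) (μ : Measure X) : Prop :=
  ∀ ε > (0:ℝ), ∃ C : ℝ, 1 ≤ C ∧ ∀ (x : X) (n : ℕ),
    ENNReal.ofReal (C⁻¹ * Real.exp (-(n : ℝ) * pressure ρ f φ) * φ n x)
      ≤ μ (bowenBall ρ f n ε x)

/-- Expansivity of an invertible map `f` with inverse `finv`. -/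
def IsExpansive (ρ : X → X → ℝ) (f finv : X → X) : Prop :=
  ∃ ε₀ > (0:ℝ), ∀ x y : X,
    (∀ n : ℕ, ρ (f^[n] x) (f^[n] y) ≤ ε₀ ∧ ρ (finv^[n] x) (finv^[n] y) ≤ ε₀) → x = y

/-! ### Mixing properties -/

/-- The Kolmogorov property of the invertible measure-preserving system `(X,μ,f)`
(`finv` is the inverse of `f`): there is a sub-σ-algebra `K` with `K ⊆ fK`,
`⋁_{n≥0} f^n K` the full σ-algebra, and `⋂_{n≥0} f^{-n} K` trivial mod `μ`. -/
def HasKProperty [m : MeasurableSpace X] (μ : Measure X) (f finv : X → X) : Prop :=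
  ∃ K : MeasurableSpace X, K ≤ m ∧ K ≤ K.map f ∧
    (⨆ n : ℕ, K.map (f^[n])) = m ∧
    ∀ A : Set X, MeasurableSet[⨅ n : ℕ, K.map (finv^[n])] A → μ A = 0 ∨ μ A = 1

/-- Mixing of a measure-preserving system. -/
def IsMixing [MeasurableSpace X] (μ : Measure X) (f : X → X) : Prop :=
  ∀ A B : Set X, MeasurableSet A → MeasurableSet B →
    Tendsto (fun n => μ ((f^[n]) ⁻¹' A ∩ B)) atTop (nhds (μ A * μ B))

/-- A set of natural numbers has upper density zero. -/
def UpperDensityZero (E : Set ℕ) : Prop :=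
  Tendsto (fun n => (Nat.card (E ∩ Set.Iio n : Set ℕ) : ℝ) / n) atTop (nhds 0)

/-- Weak mixing: for all measurable `A,B` there is a set `E ⊆ ℕ` of upper density zero
such that `μ(f^n A ∩ B) → μ(A)μ(B)` along `n ∉ E`. -/
def IsWeaklyMixing [MeasurableSpace X] (μ : Measure X) (f : X → X) : Prop :=
  ∀ A B : Set X, MeasurableSet A → MeasurableSet B →
    ∃ E : Set ℕ, UpperDensityZero E ∧
      Tendsto (fun n => μ ((f^[n]) ⁻¹' A ∩ B)) (atTop ⊓ Filter.principal Eᶜ)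
        (nhds (μ A * μ B))

/-- Total ergodicity: `f^n` is ergodic for every `n ≥ 1`. -/
def IsTotallyErgodic [MeasurableSpace X] (μ : Measure X) (f : X → X) : Prop :=
  ∀ n : ℕ, 1 ≤ n → Ergodic (f^[n]) μ

/-! ### Measure-theoretic isomorphism and the Bernoulli property -/

/-- Measure-theoretic isomorphism of the systems `(X,μ,f)` and `(Y,ν,g)`. -/
def IsMeasureIso {Y : Type*} [MeasurableSpace X] [MeasurableSpace Y]
    (μ : Measure X) (ν : Measure Y) (f : X → X) (g : Y → Y) : Prop :=
  ∃ Θ : X → Y, Measurable Θ ∧ Measure.map Θ μ = ν ∧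
    (∀ᵐ x ∂μ, Θ (f x) = g (Θ x)) ∧
    ∃ Ψ : Y → X, Measurable Ψ ∧ (∀ᵐ x ∂μ, Ψ (Θ x) = x) ∧ (∀ᵐ y ∂ν, Θ (Ψ y) = y)

/-- The left shift on a full shift space `ℤ → ι`. -/
def fullShift {ι : Type*} : (ℤ → ι) → (ℤ → ι) := fun x i => x (i + 1)

/-- `(X,μ,f)` is Bernoulli: it is measurably isomorphic to a Bernoulli shift, i.e. to a
two-sided full shift on a finite alphabet equipped with a product (i.i.d.) measure. -/
def IsBernoulli [MeasurableSpace X] (μ : Measure X) (f : X → X) : Prop :=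
  ∃ (m : ℕ) (p : Fin m → ℝ≥0∞), (∑ i : Fin m, p i) = 1 ∧
    ∃ ν : Measure (ℤ → Fin m),
      (∀ (s : Finset ℤ) (a : ℤ → Fin m),
        ν {x : ℤ → Fin m | ∀ i ∈ s, x i = a i} = ∏ i ∈ s, p (a i)) ∧
      IsMeasureIso μ ν f fullShift

section Separated

variable {Y : Type*} {ρ : Y → Y → ℝ} {g : Y → Y} {n : ℕ} {ε ε' : ℝ} {E E' : Finset Y}

lemma IsSeparatedSet.subset (hE : IsSeparatedSet ρ g n ε E) (h : E' ⊆ E) :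
    IsSeparatedSet ρ g n ε E' :=
  fun x hx y hy hxy => hE x (h hx) y (h hy) hxy

lemma IsSeparatedSet.of_le (hE : IsSeparatedSet ρ g n ε' E) (h : ε ≤ ε') :
    IsSeparatedSet ρ g n ε E := by
  intro x hx y hy hxy
  obtain ⟨k, hk, hd⟩ := hE x hx y hy hxy
  exact ⟨k, hk, h.trans hd⟩

lemma isSeparatedSet_empty : IsSeparatedSet ρ g n ε ∅ := by
  simp [IsSeparatedSet]

lemma isSeparatedSet_singleton (z : Y) : IsSeparatedSet ρ g n ε {z} := by
  simp [IsSeparatedSet]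

/-- The partition function `Z_n(Φ, ε)` of the definition of `pressure`. -/
noncomputable def partitionFn (ρ : Y → Y → ℝ) (g : Y → Y) (χ : ℕ → Y → ℝ) (n : ℕ) (ε : ℝ) : ℝ :=
  sSup ((fun E : Finset Y => ∑ x ∈ E, χ n x) '' {E : Finset Y | IsSeparatedSet ρ g n ε E})

noncomputable def logPartitionRate (ρ : Y → Y → ℝ) (g : Y → Y) (χ : ℕ → Y → ℝ) (ε : ℝ)
    (n : ℕ) : ℝ :=
  Real.log (partitionFn ρ g χ n ε) / n

lemma pressure_eq_sSup_limsup_logPartitionRate (ρ : Y → Y → ℝ) (g : Y → Y) (χ : ℕ → Y → ℝ) :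
    pressure ρ g χ = sSup {p : ℝ | ∃ ε > (0:ℝ), p = atTop.limsup (logPartitionRate ρ g χ ε)} :=
  rfl

lemma pressure_of_isEmpty [IsEmpty Y] (ρ : Y → Y → ℝ) (g : Y → Y) (χ : ℕ → Y → ℝ) :
    pressure ρ g χ = 0 := by
  have hZ : ∀ n ε, partitionFn ρ g χ n ε = 0 := by
    intro n ε
    have : (fun E : Finset Y => ∑ x ∈ E, χ n x) '' {E | IsSeparatedSet ρ g n ε E} = {0} :=
      Set.eq_singleton_iff_unique_mem.2 ⟨⟨∅, isSeparatedSet_empty, by simp⟩,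
        by rintro _ ⟨E, -, rfl⟩; simp [Finset.eq_empty_of_isEmpty E]⟩
    rw [partitionFn, this, csSup_singleton]
  have hrate : ∀ ε, logPartitionRate ρ g χ ε = fun _ => 0 := fun ε =>
    funext fun n => by rw [logPartitionRate, hZ, Real.log_zero, zero_div]
  have : {p : ℝ | ∃ ε > (0:ℝ), p = atTop.limsup (logPartitionRate ρ g χ ε)} = {0} := by
    simp only [hrate, limsup_const]
    exact Set.eq_singleton_iff_unique_mem.2 ⟨⟨1, one_pos, rfl⟩, by rintro _ ⟨ε, -, rfl⟩; rfl⟩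
  rw [pressure_eq_sSup_limsup_logPartitionRate, this, csSup_singleton]

variable {χ : ℕ → Y → ℝ}

lemma partitionFn_le_pow_mul {N : ℕ} (hcard : ∀ E, IsSeparatedSet ρ g n ε E → E.card ≤ N ^ n)
    {M : ℝ} (hM0 : 0 ≤ M) (hM : ∀ x, χ n x ≤ M) : partitionFn ρ g χ n ε ≤ N ^ n * M := by
  refine csSup_le ⟨0, ∅, isSeparatedSet_empty, by simp⟩ ?_
  rintro _ ⟨E, hE, rfl⟩
  calc ∑ x ∈ E, χ n x ≤ E.card * M := by
        simpa using Finset.sum_le_card_nsmul E (χ n) M fun x _ => hM x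
    _ ≤ N ^ n * M := by gcongr; exact_mod_cast hcard E hE

end Separated

section RealLemmas

variable {α : Type*} {l : Filter α}

/-- In `ℝ` the limsup of a sequence tending to `-∞` is the junk value `0`; the hypothesis
`v ≤ u + K` makes `u` and `v` tend to `-∞` together, so that no boundedness of `u` is needed. -/
lemma _root_.Real.limsup_le_limsup_of_le_of_le_add {u v : α → ℝ} {K : ℝ} (huv : u ≤ᶠ[l] v)
    (hvu : ∀ᶠ x in l, v x ≤ u x + K) (hv : l.IsBoundedUnder (· ≤ ·) v) :
    limsup u l ≤ limsup v l := by
  by_cases hu : l.IsCoboundedUnder (· ≤ ·) u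
  · exact limsup_le_limsup huv hu hv
  have hv' : ¬ l.IsCoboundedUnder (· ≤ ·) v := by
    rintro ⟨b, hb⟩
    refine hu ⟨b - K, fun a ha => ?_⟩
    have hva : ∀ᶠ x in l, v x ≤ a + K := by
      filter_upwards [hvu, show ∀ᶠ x in l, u x ≤ a from ha] with x h₁ h₂
      linarith
    linarith [hb (a + K) hva]
  rw [Real.limsup_of_not_isCoboundedUnder hu, Real.limsup_of_not_isCoboundedUnder hv']

lemma _root_.Real.limsup_const_mul_of_pos {c : ℝ} (hc : 0 < c) (u : α → ℝ) :
    limsup (fun x => c * u x) l = c * limsup u l := by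
  rw [limsup_eq, limsup_eq, ← smul_eq_mul, ← Real.sInf_smul_of_nonneg hc.le]
  congr 1
  ext a
  simp only [Set.mem_ofPred_eq, Set.mem_smul_set_iff_inv_smul_mem₀ hc.ne', smul_eq_mul]
  refine eventually_congr (Eventually.of_forall fun x => ?_)
  rw [le_inv_mul_iff₀ hc]

lemma _root_.Real.sSup_mul_sSup_le {A B : Set ℝ} (hA : A.Nonempty) (hB : B.Nonempty)
    (hA0 : ∀ a ∈ A, 0 ≤ a) (hB0 : 0 ≤ sSup B) {c : ℝ} (h : ∀ a ∈ A, ∀ b ∈ B, a * b ≤ c) :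
    sSup A * sSup B ≤ c := by
  rw [mul_comm, ← smul_eq_mul, ← Real.sSup_smul_of_nonneg hB0]
  refine csSup_le hA.smul_set ?_
  rintro _ ⟨a, ha, rfl⟩
  change sSup B * a ≤ c
  rw [mul_comm, ← smul_eq_mul, ← Real.sSup_smul_of_nonneg (hA0 a ha)]
  refine csSup_le hB.smul_set ?_
  rintro _ ⟨b, hb, rfl⟩
  exact h a ha b hb

end RealLemmas

section Compact

variable {Y : Type*} [MetricSpace Y] [CompactSpace Y] {g : Y → Y} {χ : ℕ → Y → ℝ} {n : ℕ}
  {ε δ : ℝ}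

/-- Points of a separated set have distinct itineraries through a finite cover by
`ε/2`-balls. -/
lemma exists_card_le_pow_of_isSeparatedSet (g : Y → Y) (hε : 0 < ε) :
    ∃ N : ℕ, 0 < N ∧ ∀ n (E : Finset Y), IsSeparatedSet dist g n ε E → E.card ≤ N ^ n := by
  obtain ⟨t, ht⟩ := isCompact_univ.elim_finite_subcover (fun y : Y => Metric.ball y (ε / 2))
    (fun _ => Metric.isOpen_ball)
    (fun y _ => Set.mem_iUnion.2 ⟨y, Metric.mem_ball_self (by linarith)⟩)
  have hcov : ∀ z : Y, ∃ a ∈ t, dist z a < ε / 2 := by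
    simpa using fun z => ht (Set.mem_univ z)
  choose c hct hc using hcov
  refine ⟨max t.card 1, by positivity, fun n E hE => ?_⟩
  have hinj : Set.InjOn (fun y (k : Fin n) => (⟨c (g^[k] y), hct _⟩ : t)) E := by
    intro x hx y hy hxy
    by_contra hne
    obtain ⟨k, hk, hd⟩ := hE x hx y hy hne
    have hck : c (g^[k] x) = c (g^[k] y) := congrArg Subtype.val (congrFun hxy ⟨k, hk⟩)
    have := dist_triangle_right (g^[k] x) (g^[k] y) (c (g^[k] y))
    linarith [hc (g^[k] y), hck ▸ hc (g^[k] x)]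
  calc E.card ≤ Fintype.card (Fin n → t) :=
        Finset.card_le_card_of_injOn _ (fun _ _ => Finset.mem_univ _) hinj
    _ = t.card ^ n := by simp
    _ ≤ max t.card 1 ^ n := Nat.pow_le_pow_left (le_max_left _ _) n

lemma bddAbove_separatedSums (hχ : Continuous (χ n)) (hε : 0 < ε) :
    BddAbove ((fun E : Finset Y => ∑ x ∈ E, χ n x) '' {E | IsSeparatedSet dist g n ε E}) := by
  obtain ⟨N, -, hN⟩ := exists_card_le_pow_of_isSeparatedSet g hε
  obtain ⟨M, hM⟩ := (isCompact_range hχ).bddAbove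
  refine ⟨N ^ n * max M 0, ?_⟩
  rintro _ ⟨E, hE, rfl⟩
  calc ∑ x ∈ E, χ n x ≤ E.card * max M 0 := by
        simpa using Finset.sum_le_card_nsmul E (χ n) _
          fun x _ => (hM (Set.mem_range_self x)).trans (le_max_left _ _)
    _ ≤ N ^ n * max M 0 := by gcongr; exact_mod_cast hN n E hE

lemma sum_le_partitionFn (hχ : Continuous (χ n)) (hε : 0 < ε) {E : Finset Y}
    (hE : IsSeparatedSet dist g n ε E) : ∑ x ∈ E, χ n x ≤ partitionFn dist g χ n ε :=
  le_csSup (bddAbove_separatedSums hχ hε) ⟨E, hE, rfl⟩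

lemma le_partitionFn (hχ : Continuous (χ n)) (hε : 0 < ε) (x : Y) :
    χ n x ≤ partitionFn dist g χ n ε := by
  simpa using sum_le_partitionFn hχ hε (isSeparatedSet_singleton x)

lemma partitionFn_nonneg (hχ : Continuous (χ n)) (hε : 0 < ε) :
    0 ≤ partitionFn dist g χ n ε := by
  simpa using sum_le_partitionFn (E := ∅) hχ hε isSeparatedSet_empty

lemma partitionFn_pos [Nonempty Y] (hχ : Continuous (χ n)) (hχpos : ∀ x, 0 < χ n x)
    (hε : 0 < ε) : 0 < partitionFn dist g χ n ε :=
  (hχpos (Classical.arbitrary Y)).trans_le (le_partitionFn hχ hε _)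

lemma partitionFn_anti (hχ : Continuous (χ n)) (hε : 0 < ε) (h : ε ≤ δ) :
    partitionFn dist g χ n δ ≤ partitionFn dist g χ n ε :=
  csSup_le_csSup (bddAbove_separatedSums hχ hε) ⟨0, ∅, isSeparatedSet_empty, by simp⟩
    (by rintro _ ⟨E, hE, rfl⟩; exact ⟨E, hE.of_le h, rfl⟩)

lemma exists_partitionFn_le_pow_mul (hχ : ∀ n, Continuous (χ n)) (hδ : 0 < δ) :
    ∃ N : ℕ, 0 < N ∧ ∀ n ε, 0 < ε →
      partitionFn dist g χ n δ ≤ N ^ n * partitionFn dist g χ n ε := by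
  obtain ⟨N, hN0, hN⟩ := exists_card_le_pow_of_isSeparatedSet g hδ
  exact ⟨N, hN0, fun n ε hε => partitionFn_le_pow_mul (hN n) (partitionFn_nonneg (hχ n) hε)
    (le_partitionFn (hχ n) hε)⟩

end Compact

section Potential

variable {X X' : Type*} [TopologicalSpace X] [TopologicalSpace X'] {f : X → X} {f' : X' → X'}
  {φ : ℕ → X → ℝ} {φ' : ℕ → X' → ℝ}

lemma IsSubadditivePotential.le_mul (hφ : IsSubadditivePotential f φ) {m n : ℕ} (hm : 1 ≤ m)
    (hn : 1 ≤ n) (x : X) : φ (m + n) x ≤ φ m x * φ n (f^[m] x) := by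
  have hpos := hφ.2.1
  have := hφ.2.2 m n hm hn x
  rwa [← Real.log_mul (hpos _ _).ne' (hpos _ _).ne',
    Real.log_le_log_iff (hpos _ _) (mul_pos (hpos _ _) (hpos _ _))] at this

lemma IsSubadditivePotential.le_pow (hφ : IsSubadditivePotential f φ) {M : ℝ}
    (hM : ∀ x, φ 1 x ≤ M) {n : ℕ} (hn : 1 ≤ n) (x : X) : φ n x ≤ M ^ n := by
  induction n, hn using Nat.le_induction generalizing x with
  | base => simpa using hM x
  | succ n hn ih =>
    calc φ (n + 1) x ≤ φ n x * φ 1 (f^[n] x) := hφ.le_mul hn le_rfl x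
      _ ≤ M ^ n * M := mul_le_mul (ih x) (hM _) (hφ.2.1 _ _).le ((hφ.2.1 _ x).le.trans (ih x))
      _ = M ^ (n + 1) := (pow_succ M n).symm

lemma IsSubadditivePotential.prod (hφ : IsSubadditivePotential f φ)
    (hφ' : IsSubadditivePotential f' φ') :
    IsSubadditivePotential (Prod.map f f') (fun n p => φ n p.1 * φ' n p.2) := by
  obtain ⟨hcont, hpos, hsub⟩ := hφ
  obtain ⟨hcont', hpos', hsub'⟩ := hφ'
  refine ⟨fun n => ((hcont n).comp continuous_fst).mul ((hcont' n).comp continuous_snd),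
    fun n p => mul_pos (hpos n p.1) (hpos' n p.2), fun m n hm hn p => ?_⟩
  simp only [Prod.map_iterate, Prod.map_fst, Prod.map_snd]
  simp only [Real.log_mul (hpos _ _).ne' (hpos' _ _).ne']
  linarith [hsub m n hm hn p.1, hsub' m n hm hn p.2]

end Potential

section Product

variable {X X' : Type*} [MetricSpace X] [MetricSpace X'] {f : X → X} {f' : X' → X'} {n : ℕ}
  {ε : ℝ}

lemma IsSeparatedSet.insert [DecidableEq X] {E : Finset X} {x : X}
    (hE : IsSeparatedSet dist f n ε E)
    (hx : ∀ y ∈ E, ∃ k < n, ε ≤ dist (f^[k] y) (f^[k] x)) :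
    IsSeparatedSet dist f n ε (insert x E) := by
  intro y hy z hz hyz
  rcases Finset.mem_insert.1 hy with rfl | hyE <;> rcases Finset.mem_insert.1 hz with rfl | hzE
  · exact absurd rfl hyz
  · simpa only [dist_comm] using hx z hzE
  · exact hx y hyE
  · exact hE y hyE z hzE hyz

lemma dist_prodMap_iterate (k : ℕ) (p q : X × X') :
    dist ((Prod.map f f')^[k] p) ((Prod.map f f')^[k] q)
      = max (dist (f^[k] p.1) (f^[k] q.1)) (dist (f'^[k] p.2) (f'^[k] q.2)) := by
  rw [Prod.map_iterate, Prod.dist_eq]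
  rfl

lemma IsSeparatedSet.prod {E : Finset X} {E' : Finset X'} (hE : IsSeparatedSet dist f n ε E)
    (hE' : IsSeparatedSet dist f' n ε E') : IsSeparatedSet dist (Prod.map f f') n ε (E ×ˢ E') := by
  rintro ⟨x, y⟩ hp ⟨x', y'⟩ hq hpq
  simp only [Finset.mem_product] at hp hq
  simp only [dist_prodMap_iterate]
  by_cases hx : x = x'
  · obtain ⟨k, hk, hd⟩ := hE' y hp.2 y' hq.2 fun hy => hpq (by rw [hx, hy])
    exact ⟨k, hk, hd.trans (le_max_right _ _)⟩
  · obtain ⟨k, hk, hd⟩ := hE x hp.1 x' hq.1 hx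
    exact ⟨k, hk, hd.trans (le_max_left _ _)⟩

lemma IsSeparatedSet.snd_of_fst_close {F : Finset (X × X')}
    (hF : IsSeparatedSet dist (Prod.map f f') n ε F)
    (hclose : ∀ p ∈ F, ∀ q ∈ F, ∀ k < n, dist (f^[k] p.1) (f^[k] q.1) < ε) :
    ∀ p ∈ F, ∀ q ∈ F, p ≠ q → ∃ k < n, ε ≤ dist (f'^[k] p.2) (f'^[k] q.2) := by
  intro p hp q hq hpq
  obtain ⟨k, hk, hd⟩ := hF p hp q hq hpq
  rw [dist_prodMap_iterate] at hd
  exact ⟨k, hk, (le_max_iff.1 hd).resolve_left (hclose p hp q hq k hk).not_ge⟩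

lemma sum_mul_le_of_fst_close {χ : X → ℝ} {χ' : X' → ℝ} (hε : 0 < ε) (hχ' : ∀ y, 0 ≤ χ' y)
    {c S : ℝ} (hc0 : 0 ≤ c) (hS : ∀ E, IsSeparatedSet dist f' n ε E → ∑ y ∈ E, χ' y ≤ S)
    {F : Finset (X × X')} (hF : IsSeparatedSet dist (Prod.map f f') n ε F)
    (hclose : ∀ p ∈ F, ∀ q ∈ F, ∀ k < n, dist (f^[k] p.1) (f^[k] q.1) < ε)
    (hc : ∀ p ∈ F, χ p.1 ≤ c) : ∑ p ∈ F, χ p.1 * χ' p.2 ≤ c * S := by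
  classical
  have hsnd := hF.snd_of_fst_close hclose
  have hinj : Set.InjOn Prod.snd (F : Set (X × X')) := by
    intro p hp q hq hpq
    by_contra hne
    obtain ⟨k, -, hd⟩ := hsnd p hp q hq hne
    simp only [hpq, dist_self] at hd
    linarith
  have hsep : IsSeparatedSet dist f' n ε (F.image Prod.snd) := by
    simp only [IsSeparatedSet, Finset.mem_image]
    rintro _ ⟨p, hp, rfl⟩ _ ⟨q, hq, rfl⟩ hne
    exact hsnd p hp q hq fun h => hne (h ▸ rfl)
  calc ∑ p ∈ F, χ p.1 * χ' p.2 ≤ ∑ p ∈ F, c * χ' p.2 :=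
        Finset.sum_le_sum fun p hp => mul_le_mul_of_nonneg_right (hc p hp) (hχ' _)
    _ = c * ∑ y ∈ F.image Prod.snd, χ' y := by rw [Finset.sum_image hinj, Finset.mul_sum]
    _ ≤ c * S := mul_le_mul_of_nonneg_left (hS _ hsep) hc0

/-- Greedy selection: the heaviest first coordinate `x₁` absorbs all pairs whose first
coordinate stays `ε/2`-close to it, and the remaining pairs are handled recursively. -/
lemma exists_isSeparatedSet_sum_mul_le [DecidableEq X] {χ : X → ℝ} {χ' : X' → ℝ} (hε : 0 < ε)
    (hχ : ∀ x, 0 ≤ χ x) (hχ' : ∀ y, 0 ≤ χ' y) {S : ℝ}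
    (hS : ∀ E, IsSeparatedSet dist f' n ε E → ∑ y ∈ E, χ' y ≤ S) (F : Finset (X × X'))
    (hF : IsSeparatedSet dist (Prod.map f f') n ε F) :
    ∃ E ⊆ F.image Prod.fst, IsSeparatedSet dist f n (ε / 2) E ∧
      ∑ p ∈ F, χ p.1 * χ' p.2 ≤ S * ∑ x ∈ E, χ x := by
  classical
  induction F using Finset.strongInduction with
  | _ F ih =>
  rcases F.eq_empty_or_nonempty with rfl | hFne
  · exact ⟨∅, by simp, isSeparatedSet_empty, by simp⟩
  obtain ⟨x₁, hx₁F, hmax⟩ := Finset.exists_max_image (F.image Prod.fst) χ (hFne.image _)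
  set near : X × X' → Prop := fun p => ∀ k < n, dist (f^[k] p.1) (f^[k] x₁) < ε / 2
  have hfar_ssub : F.filter (¬ near ·) ⊂ F := by
    obtain ⟨p₀, hp₀, rfl⟩ := Finset.mem_image.1 hx₁F
    exact Finset.filter_ssubset.2 ⟨p₀, hp₀, fun h => h fun k _ => by simpa using half_pos hε⟩
  obtain ⟨E, hEfar, hEsep, hEsum⟩ := ih _ hfar_ssub (hF.subset (Finset.filter_subset _ _))
  have hfar : ∀ x ∈ E, ∃ k < n, ε / 2 ≤ dist (f^[k] x) (f^[k] x₁) := by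
    intro x hx
    obtain ⟨p, hp, rfl⟩ := Finset.mem_image.1 (hEfar hx)
    simpa [near] using (Finset.mem_filter.1 hp).2
  have hx₁E : x₁ ∉ E := fun hx => by
    obtain ⟨k, -, hd⟩ := hfar x₁ hx
    rw [dist_self] at hd
    linarith
  have hnear : ∑ p ∈ F.filter near, χ p.1 * χ' p.2 ≤ χ x₁ * S := by
    refine sum_mul_le_of_fst_close hε hχ' (hχ x₁) hS (hF.subset (Finset.filter_subset _ _))
      (fun p hp q hq k hk => ?_)
      fun p hp => hmax _ (Finset.mem_image_of_mem _ (Finset.filter_subset _ _ hp))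
    linarith [(Finset.mem_filter.1 hp).2 k hk, (Finset.mem_filter.1 hq).2 k hk,
      dist_triangle_right (f^[k] p.1) (f^[k] q.1) (f^[k] x₁)]
  refine ⟨insert x₁ E, Finset.insert_subset hx₁F
    (hEfar.trans (Finset.image_subset_image (Finset.filter_subset _ _))), hEsep.insert hfar, ?_⟩
  calc ∑ p ∈ F, χ p.1 * χ' p.2
      = ∑ p ∈ F.filter near, χ p.1 * χ' p.2 + ∑ p ∈ F.filter (¬ near ·), χ p.1 * χ' p.2 :=
        (Finset.sum_filter_add_sum_filter_not _ _ _).symm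
    _ ≤ χ x₁ * S + S * ∑ x ∈ E, χ x := add_le_add hnear hEsum
    _ = S * ∑ x ∈ insert x₁ E, χ x := by rw [Finset.sum_insert hx₁E]; ring

end Product

section CompactProduct

variable {X X' : Type*} [MetricSpace X] [CompactSpace X] [MetricSpace X'] [CompactSpace X']
  {f : X → X} {f' : X' → X'} {φ : ℕ → X → ℝ} {φ' : ℕ → X' → ℝ} {n : ℕ} {ε : ℝ}

lemma partitionFn_prod_le (hφ : Continuous (φ n)) (hφ0 : ∀ x, 0 ≤ φ n x)
    (hφ' : Continuous (φ' n)) (hφ'0 : ∀ y, 0 ≤ φ' n y) (hε : 0 < ε) :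
    partitionFn dist (Prod.map f f') (fun n p => φ n p.1 * φ' n p.2) n ε
      ≤ partitionFn dist f' φ' n ε * partitionFn dist f φ n (ε / 2) := by
  classical
  refine csSup_le ⟨0, ∅, isSeparatedSet_empty, by simp⟩ ?_
  rintro _ ⟨F, hF, rfl⟩
  obtain ⟨E, -, hE, hsum⟩ := exists_isSeparatedSet_sum_mul_le hε hφ0 hφ'0
    (fun E hE => sum_le_partitionFn hφ' hε hE) F hF
  exact hsum.trans (mul_le_mul_of_nonneg_left (sum_le_partitionFn hφ (half_pos hε) hE)
    (partitionFn_nonneg hφ' hε))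

lemma mul_partitionFn_le_prod (hφ : Continuous (φ n)) (hφ0 : ∀ x, 0 ≤ φ n x)
    (hφ' : Continuous (φ' n)) (hε : 0 < ε) :
    partitionFn dist f φ n ε * partitionFn dist f' φ' n ε
      ≤ partitionFn dist (Prod.map f f') (fun n p => φ n p.1 * φ' n p.2) n ε := by
  refine Real.sSup_mul_sSup_le ?_ ?_ ?_ (partitionFn_nonneg hφ' hε) ?_
  iterate 2 exact ⟨0, ∅, isSeparatedSet_empty, Finset.sum_empty⟩
  · rintro _ ⟨E, -, rfl⟩
    exact Finset.sum_nonneg fun x _ => hφ0 x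
  · rintro _ ⟨E, hE, rfl⟩ _ ⟨E', hE', rfl⟩
    rw [Finset.sum_mul_sum, ← Finset.sum_product']
    exact sum_le_partitionFn (χ := fun n p => φ n p.1 * φ' n p.2)
      ((hφ.comp continuous_fst).mul (hφ'.comp continuous_snd)) hε (hE.prod hE')

end CompactProduct

section SelfProduct

variable {X : Type*} [MetricSpace X] [CompactSpace X] [Nonempty X] {f : X → X}
  {φ : ℕ → X → ℝ} {ε δ : ℝ}

lemma exists_eventually_logPartitionRate_le_add (hφ : IsSubadditivePotential f φ) (hδ : 0 < δ) :
    ∃ K, ∀ ε > 0, ∀ᶠ n in atTop,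
      logPartitionRate dist f φ δ n ≤ logPartitionRate dist f φ ε n + K := by
  obtain ⟨N, hN0, hN⟩ := exists_partitionFn_le_pow_mul (g := f) hφ.1 hδ
  refine ⟨Real.log N, fun ε hε => ?_⟩
  filter_upwards [eventually_ge_atTop 1] with n hn
  have hn0 : (0:ℝ) < n := by exact_mod_cast hn
  have hZ := partitionFn_pos (g := f) (hφ.1 n) (hφ.2.1 n) hε
  rw [logPartitionRate, logPartitionRate, div_add' _ _ _ hn0.ne', div_le_div_iff_of_pos_right hn0]
  calc Real.log (partitionFn dist f φ n δ)
      ≤ Real.log (N ^ n * partitionFn dist f φ n ε) :=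
        Real.log_le_log (partitionFn_pos (hφ.1 n) (hφ.2.1 n) hδ) (hN n ε hε)
    _ = Real.log (partitionFn dist f φ n ε) + Real.log N * n := by
        rw [Real.log_mul (by positivity) hZ.ne', Real.log_pow]
        ring

lemma exists_eventually_logPartitionRate_le (hφ : IsSubadditivePotential f φ) (hδ : 0 < δ) :
    ∃ C, ∀ᶠ n in atTop, logPartitionRate dist f φ δ n ≤ C := by
  obtain ⟨x₀, -, hx₀⟩ := isCompact_univ.exists_isMaxOn Set.univ_nonempty (hφ.1 1).continuousOn
  obtain ⟨N, hN0, hN⟩ := exists_card_le_pow_of_isSeparatedSet f hδ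
  have hM := hφ.2.1 1 x₀
  refine ⟨Real.log (N * φ 1 x₀), ?_⟩
  filter_upwards [eventually_ge_atTop 1] with n hn
  have hn0 : (0:ℝ) < n := by exact_mod_cast hn
  have hZ : partitionFn dist f φ n δ ≤ (N * φ 1 x₀) ^ n := by
    rw [mul_pow]
    exact partitionFn_le_pow_mul (hN n) (by positivity)
      (hφ.le_pow (fun x => hx₀ (Set.mem_univ x)) hn)
  rw [logPartitionRate, div_le_iff₀ hn0]
  calc Real.log (partitionFn dist f φ n δ) ≤ Real.log ((N * φ 1 x₀) ^ n) :=
        Real.log_le_log (partitionFn_pos (hφ.1 n) (hφ.2.1 n) hδ) hZ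
    _ = Real.log (N * φ 1 x₀) * n := by rw [Real.log_pow]; ring

lemma two_mul_logPartitionRate_le_prod (hφ : IsSubadditivePotential f φ) (hε : 0 < ε) (n : ℕ) :
    2 * logPartitionRate dist f φ ε n
      ≤ logPartitionRate dist (Prod.map f f) (fun n p => φ n p.1 * φ n p.2) ε n := by
  have hZ := partitionFn_pos (g := f) (hφ.1 n) (hφ.2.1 n) hε
  calc 2 * logPartitionRate dist f φ ε n
      = Real.log (partitionFn dist f φ n ε * partitionFn dist f φ n ε) / n := by
        rw [logPartitionRate, Real.log_mul hZ.ne' hZ.ne']; ring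
    _ ≤ _ := div_le_div_of_nonneg_right (Real.log_le_log (mul_pos hZ hZ)
        (mul_partitionFn_le_prod (hφ.1 n) (fun x => (hφ.2.1 n x).le) (hφ.1 n) hε)) n.cast_nonneg

lemma logPartitionRate_prod_le_two_mul (hφ : IsSubadditivePotential f φ) (hε : 0 < ε) (n : ℕ) :
    logPartitionRate dist (Prod.map f f) (fun n p => φ n p.1 * φ n p.2) ε n
      ≤ 2 * logPartitionRate dist f φ (ε / 2) n := by
  have hZ := partitionFn_pos (χ := fun n p => φ n p.1 * φ n p.2) (g := Prod.map f f)
    ((hφ.prod hφ).1 n) ((hφ.prod hφ).2.1 n) hε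
  have hZ₂ := partitionFn_pos (g := f) (hφ.1 n) (hφ.2.1 n) (half_pos hε)
  have hprod : partitionFn dist (Prod.map f f) (fun n p => φ n p.1 * φ n p.2) n ε
      ≤ partitionFn dist f φ n (ε / 2) * partitionFn dist f φ n (ε / 2) :=
    (partitionFn_prod_le (hφ.1 n) (fun x => (hφ.2.1 n x).le) (hφ.1 n)
      (fun x => (hφ.2.1 n x).le) hε).trans (mul_le_mul_of_nonneg_right
        (partitionFn_anti (hφ.1 n) (half_pos hε) (half_le_self hε.le)) hZ₂.le)
  calc logPartitionRate dist (Prod.map f f) (fun n p => φ n p.1 * φ n p.2) ε n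
      ≤ Real.log (partitionFn dist f φ n (ε / 2) * partitionFn dist f φ n (ε / 2)) / n :=
        div_le_div_of_nonneg_right (Real.log_le_log hZ hprod) n.cast_nonneg
    _ = 2 * logPartitionRate dist f φ (ε / 2) n := by
        rw [logPartitionRate, Real.log_mul hZ₂.ne' hZ₂.ne']; ring

lemma limsup_logPartitionRate_prod_mem_Icc (hφ : IsSubadditivePotential f φ) (hε : 0 < ε) :
    atTop.limsup (logPartitionRate dist (Prod.map f f) (fun n p => φ n p.1 * φ n p.2) ε) ∈
      Set.Icc (2 * atTop.limsup (logPartitionRate dist f φ ε))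
        (2 * atTop.limsup (logPartitionRate dist f φ (ε / 2))) := by
  obtain ⟨K, hK⟩ := exists_eventually_logPartitionRate_le_add hφ (half_pos hε)
  obtain ⟨C, hC⟩ := exists_eventually_logPartitionRate_le hφ (half_pos hε)
  set u := logPartitionRate dist f φ ε
  set w := logPartitionRate dist f φ (ε / 2)
  set v := logPartitionRate dist (Prod.map f f) (fun n p => φ n p.1 * φ n p.2) ε
  have huv : ∀ n, 2 * u n ≤ v n := two_mul_logPartitionRate_le_prod hφ hε
  have hvw : ∀ n, v n ≤ 2 * w n := logPartitionRate_prod_le_two_mul hφ hε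
  have hwu : ∀ᶠ n in atTop, 2 * w n ≤ 2 * u n + 2 * K := (hK ε hε).mono fun n h => by linarith
  have hw : atTop.IsBoundedUnder (· ≤ ·) fun n => 2 * w n :=
    isBoundedUnder_of_eventually_le (a := 2 * C) (hC.mono fun n h => by linarith)
  rw [← Real.limsup_const_mul_of_pos two_pos, ← Real.limsup_const_mul_of_pos two_pos]
  exact ⟨Real.limsup_le_limsup_of_le_of_le_add (K := 2 * K) (Eventually.of_forall huv)
      (hwu.mono fun n h => (hvw n).trans h) (hw.mono_le (Eventually.of_forall hvw)),
    Real.limsup_le_limsup_of_le_of_le_add (K := 2 * K) (Eventually.of_forall hvw)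
      (hwu.mono fun n h => by linarith [huv n]) hw⟩

end SelfProduct

lemma pressure_prod_self {X : Type*} [MetricSpace X] [CompactSpace X] {f : X → X}
    {φ : ℕ → X → ℝ} (hφ : IsSubadditivePotential f φ) :
    pressure dist (Prod.map f f) (fun n p => φ n p.1 * φ n p.2) = 2 * pressure dist f φ := by
  rcases isEmpty_or_nonempty X with hX | hX
  · simp [pressure_of_isEmpty]
  rw [pressure_eq_sSup_limsup_logPartitionRate, pressure_eq_sSup_limsup_logPartitionRate,
    ← smul_eq_mul, ← Real.sSup_smul_of_nonneg zero_le_two]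
  apply csSup_eq_csSup_of_forall_exists_le
  · rintro _ ⟨ε, hε, rfl⟩
    exact ⟨_, Set.smul_mem_smul_set ⟨ε / 2, half_pos hε, rfl⟩,
      (limsup_logPartitionRate_prod_mem_Icc hφ hε).2⟩
  · rintro _ ⟨_, ⟨ε, hε, rfl⟩, rfl⟩
    exact ⟨_, ⟨ε, hε, rfl⟩, (limsup_logPartitionRate_prod_mem_Icc hφ hε).1⟩

theorem product_potential_subadditive_and_pressure_general
    {X : Type*} [MetricSpace X] [CompactSpace X]
    (f : X → X)
    (φ : ℕ → X → ℝ) (hφ : IsSubadditivePotential f φ) :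
    IsSubadditivePotential (Prod.map f f) (fun n p => φ n p.1 * φ n p.2) ∧
      pressure dist (Prod.map f f) (fun n p => φ n p.1 * φ n p.2)
        = 2 * pressure dist f φ :=
  ⟨hφ.prod hφ, pressure_prod_self hφ⟩

/-- **Lemma 3.2.** For a subadditive potential `Φ = {log φ_n}` on an expansive
homeomorphism `(X,f)` of a compact metric space, the sequence
`Ψ = {log ψ_n}` on `(X×X, f×f)` with `ψ_n(x,y) = φ_n(x)·φ_n(y)` is a subadditive
potential and `P(Ψ) = 2 P(Φ)` (the product carries the max metric). -/
theorem product_potential_subadditive_and_pressure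
    {X : Type*} [MetricSpace X] [CompactSpace X]
    (f finv : X → X) (hf : Continuous f) (hfinv : Continuous finv)
    (hleft : Function.LeftInverse finv f) (hright : Function.RightInverse finv f)
    (hexp : IsExpansive dist f finv)
    (φ : ℕ → X → ℝ) (hφ : IsSubadditivePotential f φ) :
    IsSubadditivePotential (Prod.map f f) (fun n p => φ n p.1 * φ n p.2) ∧
      pressure dist (Prod.map f f) (fun n p => φ n p.1 * φ n p.2)
        = 2 * pressure dist f φ :=
  product_potential_subadditive_and_pressure_general f φ hφ

end SubEq
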